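/- arXiv:2106.03243 — 2 statements merged into one kernel-verified Lean document; each statement's English description precedes it below -/
import Mathlib

section
/- Let T, p be positive integers, φ_1, ..., φ_T ∈ ℝ^p, and I_1, ..., I_T ∈ {0, 1}. Set Z_0 = I_p (the p×p identity) and Z_t = Z_{t-1} + I_t φ_t φ_tᵀ for t = 1, ..., T. Let δ ∈ (0, 1), S ≥ 0, γ_t = √(log det Z_t + 2 log(1/δ)) + S, and B_t = 2 γ_{t-1} ‖φ_t‖_{Z_{t-1}⁻¹}. Then for every real b > 0, Σ_{t=1}^T min(b, I_t B_t²) ≤ 8 · (log det Z_T + 2 log(1/δ) + S² + b/8) · log det Z_T. -/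
open Matrix Finset

/-!
Write `x t = I t ‖φ t‖²_{(Z t)⁻¹}` (`rankOneGain`). By the matrix determinant lemma
`det Z (t+1) = det Z t * (1 + x t)`, so `log det Z T = ∑ log (1 + x t)` and `log det Z t` is
nondecreasing. Since `I t B t² = 4 γ t² x t` and `4 γ t² ≤ C := 8 (log det Z T + 2 log (1/δ) + S²)`,
each term is at most `min b (C x t) ≤ (C + b) log (1 + x t)`, where the last step uses
`x / (1 + x) ≤ log (1 + x)`. Summing gives `(C + b) log det Z T`.
-/

theorem Real.min_le_mul_log_one_add {C b x : ℝ} (hCb : 0 ≤ C + b) (hx : 0 ≤ x) :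
    min b (C * x) ≤ (C + b) * Real.log (1 + x) := by
  have h1x : 0 < 1 + x := by linarith
  have hmin : min b (C * x) * (1 + x) ≤ (C + b) * x := by
    nlinarith [min_le_left b (C * x), min_le_right b (C * x)]
  have hlog : x / (1 + x) ≤ Real.log (1 + x) := by
    have := Real.one_sub_inv_le_log_of_pos h1x
    rwa [show 1 - (1 + x)⁻¹ = x / (1 + x) by field_simp; ring] at this
  calc min b (C * x) ≤ (C + b) * (x / (1 + x)) := by
        rw [mul_div_assoc', le_div_iff₀ h1x]; exact hmin
    _ ≤ (C + b) * Real.log (1 + x) := by gcongr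

theorem Real.min_mul_two_mul_mul_sqrt_sq_le {b C γ c q : ℝ} (hb : 0 ≤ b) (hγ : 4 * γ ^ 2 ≤ C)
    (hc : 0 ≤ c) (hq : 0 ≤ q) :
    min b (c * (2 * γ * √q) ^ 2) ≤ (C + b) * Real.log (1 + c * q) := calc
  min b (c * (2 * γ * √q) ^ 2) = min b (4 * γ ^ 2 * (c * q)) := by
        rw [mul_pow, Real.sq_sqrt hq]; ring_nf
  _ ≤ min b (C * (c * q)) := by gcongr
  _ ≤ (C + b) * Real.log (1 + c * q) :=
        Real.min_le_mul_log_one_add (by nlinarith [sq_nonneg γ]) (by positivity)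

theorem Real.four_mul_sq_sqrt_add_le {a : ℝ} (ha : 0 ≤ a) (S : ℝ) :
    4 * (√a + S) ^ 2 ≤ 8 * (a + S ^ 2) := by
  nlinarith [add_sq_le (a := √a) (b := S), Real.sq_sqrt ha]

namespace Matrix

theorem det_add_vecMulVec {m α : Type*} [Fintype m] [DecidableEq m] [CommRing α]
    {A : Matrix m m α} (hA : IsUnit A.det) (u v : m → α) :
    (A + vecMulVec u v).det = A.det * (1 + v ⬝ᵥ A⁻¹ *ᵥ u) := by
  rw [vecMulVec_eq Unit, det_add_replicateCol_mul_replicateRow hA, det_unique (n := Unit),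
    Matrix.mul_assoc, ← replicateCol_mulVec]
  simp

theorem PosDef.add_smul_vecMulVec_self {n : Type*} [Fintype n] {Z : Matrix n n ℝ} (hZ : Z.PosDef)
    {c : ℝ} (hc : 0 ≤ c) (v : n → ℝ) : (Z + c • vecMulVec v v).PosDef :=
  hZ.add_posSemidef ((posSemidef_vecMulVec_self_star v).smul hc)

theorem det_add_smul_vecMulVec_self {n : Type*} [Fintype n] [DecidableEq n] {Z : Matrix n n ℝ}
    (hZ : IsUnit Z.det) (c : ℝ) (v : n → ℝ) :
    (Z + c • vecMulVec v v).det = Z.det * (1 + c * (v ⬝ᵥ Z⁻¹ *ᵥ v)) := by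
  rw [← smul_vecMulVec, det_add_vecMulVec hZ, mulVec_smul, dotProduct_smul, smul_eq_mul]

end Matrix

noncomputable def rankOneGain {n : Type*} [Fintype n] [DecidableEq n] (φ : ℕ → n → ℝ)
    (c : ℕ → ℝ) (Z : ℕ → Matrix n n ℝ) (t : ℕ) : ℝ :=
  c t * (φ t ⬝ᵥ (Z t)⁻¹ *ᵥ φ t)

section RankOneUpdates

variable {n : Type*} [Fintype n] [DecidableEq n] {T : ℕ} {φ : ℕ → n → ℝ} {c : ℕ → ℝ}
  {Z : ℕ → Matrix n n ℝ}

theorem posDef_of_rankOne_updates (hc : ∀ t < T, 0 ≤ c t) (hZ0 : Z 0 = 1)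
    (hZ : ∀ t < T, Z (t + 1) = Z t + c t • vecMulVec (φ t) (φ t)) :
    ∀ t ≤ T, (Z t).PosDef := by
  intro t
  induction t with
  | zero => intro _; rw [hZ0]; exact PosDef.one
  | succ t ih =>
    intro ht
    rw [hZ t ht]
    exact (ih (Nat.le_of_succ_le ht)).add_smul_vecMulVec_self (hc t ht) (φ t)

theorem dotProduct_inv_mulVec_nonneg_of_rankOne_updates (hc : ∀ t < T, 0 ≤ c t) (hZ0 : Z 0 = 1)
    (hZ : ∀ t < T, Z (t + 1) = Z t + c t • vecMulVec (φ t) (φ t)) {t : ℕ} (ht : t ≤ T)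
    (v : n → ℝ) : 0 ≤ v ⬝ᵥ (Z t)⁻¹ *ᵥ v :=
  (posDef_of_rankOne_updates hc hZ0 hZ t ht).inv.posSemidef.dotProduct_mulVec_nonneg v

theorem rankOneGain_nonneg (hc : ∀ t < T, 0 ≤ c t) (hZ0 : Z 0 = 1)
    (hZ : ∀ t < T, Z (t + 1) = Z t + c t • vecMulVec (φ t) (φ t)) {t : ℕ} (ht : t < T) :
    0 ≤ rankOneGain φ c Z t :=
  mul_nonneg (hc t ht) (dotProduct_inv_mulVec_nonneg_of_rankOne_updates hc hZ0 hZ ht.le _)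

theorem det_eq_prod_of_rankOne_updates (hc : ∀ t < T, 0 ≤ c t) (hZ0 : Z 0 = 1)
    (hZ : ∀ t < T, Z (t + 1) = Z t + c t • vecMulVec (φ t) (φ t)) :
    ∀ k ≤ T, (Z k).det = ∏ t ∈ range k, (1 + rankOneGain φ c Z t) := by
  intro k
  induction k with
  | zero => intro _; simp [hZ0]
  | succ k ih =>
    intro hk
    rw [prod_range_succ, ← ih (Nat.le_of_succ_le hk), hZ k hk, det_add_smul_vecMulVec_self
      (posDef_of_rankOne_updates hc hZ0 hZ k (Nat.le_of_succ_le hk)).det_pos.ne'.isUnit]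
    rfl

theorem log_det_eq_sum_of_rankOne_updates (hc : ∀ t < T, 0 ≤ c t) (hZ0 : Z 0 = 1)
    (hZ : ∀ t < T, Z (t + 1) = Z t + c t • vecMulVec (φ t) (φ t)) {k : ℕ} (hk : k ≤ T) :
    Real.log (Z k).det = ∑ t ∈ range k, Real.log (1 + rankOneGain φ c Z t) := by
  rw [det_eq_prod_of_rankOne_updates hc hZ0 hZ k hk, Real.log_prod]
  intro t ht
  have := rankOneGain_nonneg hc hZ0 hZ ((mem_range.mp ht).trans_le hk)
  positivity

theorem log_one_add_rankOneGain_nonneg (hc : ∀ t < T, 0 ≤ c t) (hZ0 : Z 0 = 1)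
    (hZ : ∀ t < T, Z (t + 1) = Z t + c t • vecMulVec (φ t) (φ t)) {t : ℕ} (ht : t < T) :
    0 ≤ Real.log (1 + rankOneGain φ c Z t) :=
  Real.log_nonneg (le_add_of_nonneg_right (rankOneGain_nonneg hc hZ0 hZ ht))

theorem log_det_nonneg_of_rankOne_updates (hc : ∀ t < T, 0 ≤ c t) (hZ0 : Z 0 = 1)
    (hZ : ∀ t < T, Z (t + 1) = Z t + c t • vecMulVec (φ t) (φ t)) {k : ℕ} (hk : k ≤ T) :
    0 ≤ Real.log (Z k).det := by
  rw [log_det_eq_sum_of_rankOne_updates hc hZ0 hZ hk]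
  exact sum_nonneg fun t ht =>
    log_one_add_rankOneGain_nonneg hc hZ0 hZ ((mem_range.mp ht).trans_le hk)

theorem log_det_le_of_rankOne_updates (hc : ∀ t < T, 0 ≤ c t) (hZ0 : Z 0 = 1)
    (hZ : ∀ t < T, Z (t + 1) = Z t + c t • vecMulVec (φ t) (φ t)) {k : ℕ} (hk : k ≤ T) :
    Real.log (Z k).det ≤ Real.log (Z T).det := by
  rw [log_det_eq_sum_of_rankOne_updates hc hZ0 hZ hk,
    log_det_eq_sum_of_rankOne_updates hc hZ0 hZ le_rfl]
  exact sum_le_sum_of_subset_of_nonneg (range_subset_range.mpr hk) fun t ht _ =>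
    log_one_add_rankOneGain_nonneg hc hZ0 hZ (mem_range.mp ht)

end RankOneUpdates

theorem stmt_9_general (T p : ℕ)
    (φ : ℕ → Fin p → ℝ) (I : ℕ → ℝ)
    (hI : ∀ t < T, I t = 0 ∨ I t = 1)
    (δ S : ℝ) (hδ : δ ∈ Set.Ioo (0 : ℝ) 1)
    (Z : ℕ → Matrix (Fin p) (Fin p) ℝ) (hZ0 : Z 0 = 1)
    (hZ : ∀ t < T, Z (t + 1) = Z t + I t • vecMulVec (φ t) (φ t))
    (γ B : ℕ → ℝ)
    (hγ : ∀ t < T, γ t = Real.sqrt (Real.log (Z t).det + 2 * Real.log (1 / δ)) + S)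
    (hB : ∀ t < T, B t = 2 * γ t * Real.sqrt (φ t ⬝ᵥ (Z t)⁻¹ *ᵥ φ t))
    (b : ℝ) (hb : 0 < b) :
    ∑ t ∈ Finset.range T, min b (I t * (B t) ^ 2) ≤
      8 * (Real.log (Z T).det + 2 * Real.log (1 / δ) + S ^ 2 + b / 8)
        * Real.log (Z T).det := by
  have hI_nonneg : ∀ t < T, 0 ≤ I t := fun t ht => by rcases hI t ht with h | h <;> simp [h]
  have hlogδ : 0 ≤ Real.log (1 / δ) := Real.log_nonneg (one_le_one_div hδ.1 hδ.2.le)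
  set C := 8 * (Real.log (Z T).det + 2 * Real.log (1 / δ) + S ^ 2)
  have hterm : ∀ t ∈ range T,
      min b (I t * B t ^ 2) ≤ (C + b) * Real.log (1 + rankOneGain φ I Z t) := by
    intro t ht
    rw [mem_range] at ht
    have ha : 0 ≤ Real.log (Z t).det + 2 * Real.log (1 / δ) := by
      linarith [log_det_nonneg_of_rankOne_updates hI_nonneg hZ0 hZ ht.le]
    have hγC : 4 * γ t ^ 2 ≤ C := by
      rw [hγ t ht]
      linarith [Real.four_mul_sq_sqrt_add_le ha S,
        log_det_le_of_rankOne_updates hI_nonneg hZ0 hZ ht.le]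
    rw [hB t ht]
    exact Real.min_mul_two_mul_mul_sqrt_sq_le hb.le hγC (hI_nonneg t ht)
      (dotProduct_inv_mulVec_nonneg_of_rankOne_updates hI_nonneg hZ0 hZ ht.le (φ t))
  calc ∑ t ∈ range T, min b (I t * B t ^ 2)
      ≤ ∑ t ∈ range T, (C + b) * Real.log (1 + rankOneGain φ I Z t) := sum_le_sum hterm
    _ = (C + b) * Real.log (Z T).det := by
          rw [← mul_sum, log_det_eq_sum_of_rankOne_updates hI_nonneg hZ0 hZ le_rfl]
    _ = _ := by ring

/-- Clipped sum of squared query thresholds of the frozen-NTK selective sampler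
(Lemma on the log-determinant term). Rounds are indexed `0, ..., T-1`, with
`Z t` the covariance matrix *before* round `t` (so `Z 0 = I`). -/
theorem stmt_9 (T p : ℕ) (hT : 0 < T) (hp : 0 < p)
    (φ : ℕ → Fin p → ℝ) (I : ℕ → ℝ)
    (hI : ∀ t < T, I t = 0 ∨ I t = 1)
    (δ S : ℝ) (hδ : δ ∈ Set.Ioo (0 : ℝ) 1) (hS : 0 ≤ S)
    (Z : ℕ → Matrix (Fin p) (Fin p) ℝ) (hZ0 : Z 0 = 1)
    (hZ : ∀ t < T, Z (t + 1) = Z t + I t • vecMulVec (φ t) (φ t))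
    (γ B : ℕ → ℝ)
    (hγ : ∀ t < T, γ t = Real.sqrt (Real.log (Z t).det + 2 * Real.log (1 / δ)) + S)
    (hB : ∀ t < T, B t = 2 * γ t * Real.sqrt (φ t ⬝ᵥ (Z t)⁻¹ *ᵥ φ t))
    (b : ℝ) (hb : 0 < b) :
    ∑ t ∈ Finset.range T, min b (I t * (B t) ^ 2) ≤
      8 * (Real.log (Z T).det + 2 * Real.log (1 / δ) + S ^ 2 + b / 8)
        * Real.log (Z T).det :=
  stmt_9_general T p φ I hI δ S hδ Z hZ0 hZ γ B hγ hB b hb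
end

section
/- Let α ≥ 0, δ ∈ (0, 1), and T a positive integer. Let Δ_1, ..., Δ_T be i.i.d. real random variables satisfying the low-noise condition P(|Δ_1| ≤ ε) ≤ ε^α for every ε ∈ (0, 1/2]. Then with probability at least 1 − log₂(12T) · δ, simultaneously for all ε ∈ (0, 1/2): #{ t ∈ [T] : |Δ_t| ≤ ε } ≤ 3 ε^α · T + 2 · L(T, δ), where L(T, δ) = log( 5.2 · (log(2T))^{1.4} / δ ). -/
/-!
Chernoff's bound at `t = log 2` controls the count at one fixed margin: if each instance is
small with probability at most `p`, the count reaches `a` with probability at most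
`exp (p T - a log 2)`. It is applied on the dyadic grid of margins `ε_k` with `ε_k ^ α = 2⁻ᵏ`,
`k ≤ J = ⌊log₂ 12T⌋ + 1`, with budget `3/2 · 2⁻ᵏ T + 2 L` (only `2 L` at the last level, where
`2⁻ᴶ T ≤ 1/12`). The choice of `L` makes each failure probability at most `δ/2`, and there are
`J + 1 ≤ 2 log₂ (12 T)` levels. Every `ε < 1/2` lies below the grid point of the dyadic level
of `ε ^ α`, and the count is monotone in `ε`, which costs the factor `2` in `3 = 2 · 3/2`.
-/

open MeasureTheory Finset Real ProbabilityTheory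

section Chernoff

variable {Ω ι β : Type*} [Fintype ι] [MeasurableSpace β] {m0 : MeasurableSpace Ω}
  {μ : Measure Ω} [IsProbabilityMeasure μ]

lemma mgf_indicator_one_le {A : Set Ω} (hA : MeasurableSet A) (t : ℝ) :
    mgf (A.indicator 1) μ t ≤ exp (μ.real A * (exp t - 1)) := by
  have hexp : (fun ω => exp (t * A.indicator 1 ω)) =
      A.indicator (fun _ => exp t - 1) + fun _ => 1 := by
    ext ω
    by_cases h : ω ∈ A <;> simp [h]
  rw [mgf, hexp, integral_add' ((integrable_const _).indicator hA) (integrable_const 1),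
    integral_indicator_const _ hA]
  simp only [smul_eq_mul, integral_const, probReal_univ, mul_one]
  linarith [add_one_le_exp (μ.real A * (exp t - 1))]

theorem measureReal_le_card_filter_mem_le (X : ι → Ω → β) (hX : ∀ i, Measurable (X i))
    (hindep : iIndepFun X μ) {S : Set β} [DecidablePred (· ∈ S)] (hS : MeasurableSet S) {p t : ℝ}
    (hp : ∀ i, μ.real (X i ⁻¹' S) ≤ p) (ht : 0 ≤ t) (a : ℝ) :
    μ.real {ω | a ≤ ((univ.filter fun i => X i ω ∈ S).card : ℝ)} ≤
      exp (p * (exp t - 1) * Fintype.card ι - t * a) := by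
  set Y : ι → Ω → ℝ := fun i => (X i ⁻¹' S).indicator 1
  have hYm : ∀ i, Measurable (Y i) := fun i => measurable_one.indicator (hX i hS)
  have hYindep : iIndepFun Y μ := hindep.comp _ fun _ => measurable_one.indicator hS
  have hcard : ∀ ω, ((univ.filter fun i => X i ω ∈ S).card : ℝ) = (∑ i, Y i) ω := by
    intro ω
    rw [natCast_card_filter, Finset.sum_apply]
    refine sum_congr rfl fun i _ => ?_
    by_cases h : X i ω ∈ S <;> simp [Y, h]
  have hcard_le : ∀ ω, (∑ i, Y i) ω ≤ Fintype.card ι := fun ω => by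
    rw [← hcard]
    exact_mod_cast card_filter_le _ _
  have hmgf : mgf (∑ i, Y i) μ t ≤ exp (p * (exp t - 1) * Fintype.card ι) := by
    have hmgf_le : ∀ i, mgf (Y i) μ t ≤ exp (p * (exp t - 1)) := fun i =>
      (mgf_indicator_one_le (hX i hS) t).trans <| exp_le_exp.2 <|
        mul_le_mul_of_nonneg_right (hp i) (by linarith [add_one_le_exp t])
    rw [hYindep.mgf_sum hYm]
    calc ∏ i, mgf (Y i) μ t ≤ ∏ _i : ι, exp (p * (exp t - 1)) :=
          prod_le_prod (fun _ _ => mgf_nonneg) fun i _ => hmgf_le i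
      _ = exp (p * (exp t - 1) * Fintype.card ι) := by
          rw [prod_const, ← exp_nat_mul, card_univ, mul_comm]
  have hint : Integrable (fun ω => exp (t * (∑ i, Y i) ω)) μ :=
    integrable_exp_mul_of_le t _ ht (by fun_prop) (ae_of_all _ hcard_le)
  calc μ.real {ω | a ≤ ((univ.filter fun i => X i ω ∈ S).card : ℝ)}
      = μ.real {ω | a ≤ (∑ i, Y i) ω} := by simp_rw [hcard]
    _ ≤ exp (-t * a) * mgf (∑ i, Y i) μ t := measure_ge_le_exp_mul_mgf a ht hint
    _ ≤ exp (-t * a) * exp (p * (exp t - 1) * Fintype.card ι) := by gcongr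
    _ = exp (p * (exp t - 1) * Fintype.card ι - t * a) := by rw [← exp_add]; ring_nf

end Chernoff

section Grid

/-- The largest `ε ≤ 1/2` with `ε ^ α ≤ 2⁻¹ ^ k`. -/
noncomputable def marginGrid (α : ℝ) (k : ℕ) : ℝ := min (((2 : ℝ)⁻¹ ^ k) ^ α⁻¹) (1 / 2)

noncomputable def gridCountBound (T L : ℝ) (J k : ℕ) : ℝ :=
  (if k < J then 3 / 2 * (2 : ℝ)⁻¹ ^ k * T else 0) + 2 * L

variable {α : ℝ}

lemma marginGrid_pos (α : ℝ) (k : ℕ) : 0 < marginGrid α k :=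
  lt_min (by positivity) (by norm_num)

lemma marginGrid_le_half (α : ℝ) (k : ℕ) : marginGrid α k ≤ 1 / 2 := min_le_right _ _

lemma le_marginGrid_iff (hα : 0 < α) {ε : ℝ} (hε : 0 ≤ ε) (hε' : ε ≤ 1 / 2) (k : ℕ) :
    ε ≤ marginGrid α k ↔ ε ^ α ≤ (2 : ℝ)⁻¹ ^ k := by
  rw [marginGrid, le_min_iff, le_rpow_inv_iff_of_pos hε (by positivity) hα]
  exact and_iff_left hε'

lemma marginGrid_rpow_le (hα : 0 < α) (k : ℕ) : marginGrid α k ^ α ≤ (2 : ℝ)⁻¹ ^ k :=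
  (le_marginGrid_iff hα (marginGrid_pos α k).le (marginGrid_le_half α k) k).1 le_rfl

theorem le_of_forall_le_gridCountBound {N : ℝ → ℝ} (hN : Monotone N) (hα : 0 < α) {T L : ℝ}
    (hT : 0 ≤ T) {J : ℕ} (hgrid : ∀ k ≤ J, N (marginGrid α k) ≤ gridCountBound T L J k)
    {ε : ℝ} (hε : 0 < ε) (hε' : ε < 1 / 2) : N ε ≤ 3 * ε ^ α * T + 2 * L := by
  have hx : 0 < ε ^ α := rpow_pos_of_pos hε α
  obtain ⟨j, hj_lt, hj_le⟩ := exists_nat_pow_near_of_lt_one hx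
    (rpow_le_one hε.le (by linarith) hα.le) (by norm_num : (0 : ℝ) < 2⁻¹) (by norm_num)
  rcases lt_or_ge j J with hjJ | hJj
  · have hεj : ε ≤ marginGrid α j := (le_marginGrid_iff hα hε.le hε'.le j).2 hj_le
    have hbound := hgrid j hjJ.le
    rw [gridCountBound, if_pos hjJ] at hbound
    have hpow : (2 : ℝ)⁻¹ ^ j ≤ 2 * ε ^ α := by rw [pow_succ] at hj_lt; linarith
    nlinarith [hN hεj, mul_le_mul_of_nonneg_right hpow hT]
  · have hεJ : ε ≤ marginGrid α J := (le_marginGrid_iff hα hε.le hε'.le J).2 <|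
      hj_le.trans (pow_le_pow_of_le_one (by norm_num) (by norm_num) hJj)
    have hbound := hgrid J le_rfl
    rw [gridCountBound, if_neg (lt_irrefl J), zero_add] at hbound
    nlinarith [hN hεJ, mul_nonneg hx.le hT]

/-- Below the last level this holds because `3/2 · log 2 ≥ 1`. -/
lemma pow_mul_sub_log_two_mul_gridCountBound_le {T L : ℝ} (hT : 0 ≤ T) {J k : ℕ}
    (hJ : 12 * T ≤ 2 ^ J) (hk : k ≤ J) :
    (2 : ℝ)⁻¹ ^ k * T - log 2 * gridCountBound T L J k ≤ 1 / 12 - 2 * L * log 2 := by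
  have hmass : 0 ≤ (2 : ℝ)⁻¹ ^ k * T := by positivity
  rw [gridCountBound]
  split_ifs with hkJ
  · nlinarith [log_two_gt_d9]
  · have hpow : (2 : ℝ)⁻¹ ^ k * T ≤ 1 / 12 := by
      rw [le_antisymm hk (not_lt.1 hkJ), inv_pow, inv_mul_le_iff₀ (by positivity)]
      linarith
    linarith

end Grid

lemma monotone_card_filter_abs_le {ι : Type*} [Fintype ι] (x : ι → ℝ) :
    Monotone fun ε : ℝ => ((univ.filter fun i => |x i| ≤ ε).card : ℝ) := fun a _ hab => by
  dsimp only
  exact_mod_cast card_le_card (monotone_filter_right univ fun i _ (h : |x i| ≤ a) => h.trans hab)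

theorem measure_compl_forall_card_filter_abs_le_le {Ω ι : Type*} [Fintype ι]
    {m0 : MeasurableSpace Ω} (μ : Measure Ω) [IsProbabilityMeasure μ] (Δ : ι → Ω → ℝ)
    (hmeas : ∀ i, Measurable (Δ i)) (hindep : iIndepFun Δ μ) {α : ℝ} (hα : 0 < α)
    (hnoise : ∀ i, ∀ ε : ℝ, 0 < ε → ε ≤ 1 / 2 → μ.real {ω | |Δ i ω| ≤ ε} ≤ ε ^ α)
    {L r : ℝ} (hL : exp (1 / 12 - 2 * L * log 2) ≤ r) :
    μ {ω | ∀ ε : ℝ, 0 < ε → ε < 1 / 2 → ((univ.filter fun i => |Δ i ω| ≤ ε).card : ℝ) ≤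
        3 * ε ^ α * Fintype.card ι + 2 * L}ᶜ ≤
      ENNReal.ofReal ((Nat.log 2 (12 * Fintype.card ι) + 2) * r) := by
  set n := Fintype.card ι
  set J := Nat.log 2 (12 * n) + 1
  let count : ℝ → Ω → ℝ := fun ε ω => (univ.filter fun i => |Δ i ω| ≤ ε).card
  have hJ : (12 * n : ℝ) ≤ 2 ^ J := by exact_mod_cast (Nat.lt_pow_succ_log_self one_lt_two _).le
  have hsub : {ω | ∀ ε : ℝ, 0 < ε → ε < 1 / 2 → count ε ω ≤ 3 * ε ^ α * n + 2 * L}ᶜ ⊆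
      ⋃ k ∈ range (J + 1), {ω | gridCountBound n L J k ≤ count (marginGrid α k) ω} := by
    intro ω hω
    simp only [Set.mem_compl_iff, Set.mem_ofPred_eq, Set.mem_iUnion, mem_range, exists_prop]
      at hω ⊢
    by_contra! hgood
    exact hω fun ε => le_of_forall_le_gridCountBound (monotone_card_filter_abs_le _) hα
      n.cast_nonneg fun k hk => (hgood k (Nat.lt_succ_of_le hk)).le
  have hlevel : ∀ k ≤ J, μ {ω | gridCountBound n L J k ≤ count (marginGrid α k) ω} ≤
      ENNReal.ofReal r := by
    intro k hk
    rw [← ofReal_measureReal]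
    refine ENNReal.ofReal_le_ofReal ?_
    calc _ ≤ exp ((2 : ℝ)⁻¹ ^ k * (exp (log 2) - 1) * n - log 2 * gridCountBound n L J k) :=
          measureReal_le_card_filter_mem_le Δ hmeas hindep (S := {x | |x| ≤ marginGrid α k})
            (measurableSet_le measurable_abs measurable_const)
            (fun i => (hnoise i _ (marginGrid_pos α k) (marginGrid_le_half α k)).trans
              (marginGrid_rpow_le hα k))
            (log_nonneg one_le_two) _
      _ ≤ exp (1 / 12 - 2 * L * log 2) := by
          rw [exp_log two_pos, show (2 : ℝ) - 1 = 1 by norm_num, mul_one]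
          exact exp_le_exp.2 (pow_mul_sub_log_two_mul_gridCountBound_le n.cast_nonneg hJ hk)
      _ ≤ r := hL
  calc _ ≤ ∑ k ∈ range (J + 1), μ {ω | gridCountBound n L J k ≤ count (marginGrid α k) ω} :=
        (measure_mono hsub).trans (measure_biUnion_finset_le _ _)
    _ ≤ ∑ _k ∈ range (J + 1), ENNReal.ofReal r :=
        sum_le_sum fun k hk => hlevel k (Nat.lt_succ_iff.1 (mem_range.1 hk))
    _ = ENNReal.ofReal ((Nat.log 2 (12 * n) + 2) * r) := by
        rw [sum_const, card_range, nsmul_eq_mul, ENNReal.ofReal_mul (by positivity),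
          ← ENNReal.ofReal_natCast]
        push_cast [J]
        ring_nf

lemma natLog_add_two_le_two_mul_logb {n : ℕ} (hn : 4 ≤ n) :
    (Nat.log 2 n + 2 : ℝ) ≤ 2 * logb 2 n := by
  have h2 : (2 : ℝ) ≤ Nat.log 2 n := by exact_mod_cast Nat.le_log_of_pow_le one_lt_two hn
  have hlog := natLog_le_logb n 2
  push_cast at hlog
  linarith

lemma two_le_mul_log_rpow {T : ℝ} (hT : 1 ≤ T) : 2 ≤ 5.2 * log (2 * T) ^ (1.4 : ℝ) := by
  have hlog : 0.69 ≤ log (2 * T) :=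
    (log_two_gt_d9.le.trans' (by norm_num)).trans (log_le_log two_pos (by linarith))
  have hsmall : (0.69 : ℝ) ^ (2 : ℝ) ≤ 0.69 ^ (1.4 : ℝ) :=
    rpow_le_rpow_of_exponent_ge (by norm_num) (by norm_num) (by norm_num)
  have hmono : (0.69 : ℝ) ^ (1.4 : ℝ) ≤ log (2 * T) ^ (1.4 : ℝ) :=
    rpow_le_rpow (by norm_num) hlog (by norm_num)
  rw [rpow_two] at hsmall
  linarith

lemma exp_sub_two_mul_log_div_mul_log_two_le {A δ : ℝ} (hA : 2 ≤ A) (hδ : 0 < δ)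
    (hδ' : δ < 1) : exp (1 / 12 - 2 * log (A / δ) * log 2) ≤ δ / 2 := by
  have hlogA : log 2 ≤ log A := log_le_log two_pos hA
  have hlogδ : log δ < 0 := log_neg hδ hδ'
  have hl2 := log_two_gt_d9
  rw [← exp_log (by positivity : 0 < δ / 2), log_div (by positivity) hδ.ne',
    log_div hδ.ne' two_ne_zero]
  refine exp_le_exp.2 ?_
  nlinarith [mul_le_mul_of_nonneg_right hlogA (by linarith : (0 : ℝ) ≤ 2 * log 2),
    mul_nonneg (neg_nonneg.2 hlogδ.le) (by linarith : (0 : ℝ) ≤ 2 * log 2 - 1)]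

lemma ofReal_one_sub_le_measure {Ω : Type*} {m0 : MeasurableSpace Ω} {μ : Measure Ω}
    [IsProbabilityMeasure μ] {s : Set Ω} {r : ℝ} (hr : 0 ≤ r)
    (hs : μ sᶜ ≤ ENNReal.ofReal r) : ENNReal.ofReal (1 - r) ≤ μ s := by
  have hunion : 1 ≤ μ s + μ sᶜ := by
    simpa [measure_univ] using measure_union_le (μ := μ) s sᶜ
  rw [ENNReal.ofReal_sub _ hr, ENNReal.ofReal_one]
  exact (tsub_le_tsub_left hs 1).trans (tsub_le_iff_right.2 hunion)

theorem stmt_17_general {Ω : Type*} {m0 : MeasurableSpace Ω} (μ : Measure Ω) [IsProbabilityMeasure μ]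
    (α δ : ℝ) (hα : 0 ≤ α) (hδ : δ ∈ Set.Ioo (0 : ℝ) 1) (T : ℕ) (hT : 0 < T)
    (Δ : Fin T → Ω → ℝ)
    (hmeas : ∀ i, Measurable (Δ i))
    (hindep : ProbabilityTheory.iIndepFun Δ μ)
    (hnoise : ∀ i, ∀ ε : ℝ, 0 < ε → ε ≤ 1 / 2 → (μ {ω | |Δ i ω| ≤ ε}).toReal ≤ ε ^ α) :
    ENNReal.ofReal (1 - Real.logb 2 (12 * T) * δ) ≤
      μ {ω | ∀ ε : ℝ, 0 < ε → ε < 1 / 2 →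
        ((Finset.univ.filter (fun t : Fin T => |Δ t ω| ≤ ε)).card : ℝ) ≤
          3 * ε ^ α * T + 2 * Real.log (5.2 * Real.log (2 * T) ^ (1.4 : ℝ) / δ)} := by
  obtain ⟨hδ0, hδ1⟩ := hδ
  have hT1 : (1 : ℝ) ≤ T := by exact_mod_cast hT
  have hA := two_le_mul_log_rpow hT1
  refine ofReal_one_sub_le_measure
    (mul_nonneg (logb_nonneg one_lt_two (by linarith)) hδ0.le) ?_
  rcases hα.eq_or_lt with rfl | hα
  · have hL : 0 ≤ log (5.2 * log (2 * T) ^ (1.4 : ℝ) / δ) :=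
      log_nonneg ((one_le_div hδ0).2 (by linarith))
    refine (measure_mono_null (fun ω hω => absurd ?_ hω) measure_empty).trans_le zero_le
    intro ε _ _
    have hcard : ((univ.filter fun t : Fin T => |Δ t ω| ≤ ε).card : ℝ) ≤ T := by
      exact_mod_cast (card_filter_le _ _).trans_eq (card_fin T)
    rw [rpow_zero]
    linarith
  · calc _ ≤ ENNReal.ofReal ((Nat.log 2 (12 * T) + 2) * (δ / 2)) := by
          simpa using measure_compl_forall_card_filter_abs_le_le μ Δ hmeas hindep hα hnoise
            (exp_sub_two_mul_log_div_mul_log_two_le hA hδ0 hδ1)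
      _ ≤ ENNReal.ofReal (logb 2 (12 * T) * δ) := by
          refine ENNReal.ofReal_le_ofReal ?_
          have hlevels := natLog_add_two_le_two_mul_logb (n := 12 * T) (by omega)
          push_cast at hlevels
          nlinarith

/-- Uniform-in-`ε` bound on the number of small-margin instances among `T`
i.i.d. margins satisfying the Mammen–Tsybakov low-noise condition with
exponent `α` (and constant 1). -/
theorem stmt_17 {Ω : Type*} {m0 : MeasurableSpace Ω} (μ : Measure Ω) [IsProbabilityMeasure μ]
    (α δ : ℝ) (hα : 0 ≤ α) (hδ : δ ∈ Set.Ioo (0 : ℝ) 1) (T : ℕ) (hT : 0 < T)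
    (Δ : Fin T → Ω → ℝ)
    (hmeas : ∀ i, Measurable (Δ i))
    (hindep : ProbabilityTheory.iIndepFun Δ μ)
    (hident : ∀ i j, ProbabilityTheory.IdentDistrib (Δ i) (Δ j) μ μ)
    (hnoise : ∀ i, ∀ ε : ℝ, 0 < ε → ε ≤ 1 / 2 → (μ {ω | |Δ i ω| ≤ ε}).toReal ≤ ε ^ α) :
    ENNReal.ofReal (1 - Real.logb 2 (12 * T) * δ) ≤
      μ {ω | ∀ ε : ℝ, 0 < ε → ε < 1 / 2 →
        ((Finset.univ.filter (fun t : Fin T => |Δ t ω| ≤ ε)).card : ℝ) ≤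
          3 * ε ^ α * T + 2 * Real.log (5.2 * Real.log (2 * T) ^ (1.4 : ℝ) / δ)} :=
  stmt_17_general (m0 := m0) μ α δ hα hδ T hT Δ hmeas hindep hnoise
end
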